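/- arXiv:1201.3491 — 4 statements merged into one kernel-verified Lean document; each statement's English description precedes it below -/
import Mathlib

section
/- Fix a single IFS level ($M = 1$). Define $T : \mathcal{G} \to \mathcal{G}$ by $(Tg)(x) = G_n(L_n^{-1}(x), g(L_n^{-1}(x)))$ for $x \in I_n = [x_{n-1}, x_n]$, where $G_n(x,y) = e_n x + \gamma_n y + f_n$ satisfies the join-up conditions $G_n(x_0, y_0) = y_{n-1}$, $G_n(x_N, y_N) = y_n$, and $|\gamma_n| < 1$ for all $n$. Then $T$ is well-defined (i.e., $Tg$ is continuous and satisfies the endpoint conditions), and $T$ is a contraction on $(\mathcal{G}, d_{\mathcal{G}})$ with contraction ratio $\max_n |\gamma_n| < 1$; hence $T$ has a unique fixed point $g \in \mathcal{G}$, and this fixed point satisfies $g(x_n) = y_n$ for all $n = 0, \ldots, N$. -/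
/-!
The interval `[x 0, x N]` is the union of the cells `[x (n - 1), x n]`, which meet only at the
nodes. On the `n`-th cell `T g` is `G_n ∘ (id, g) ∘ L_n⁻¹`; once `g` has the prescribed endpoint
values, the join-up conditions make neighbouring pieces agree at their common node, so `T g` is
continuous and lies in `𝒢` again. As `G_n` is `|γ n|`-Lipschitz in its second variable, `T`
contracts the sup distance by `max_n |γ n|`, and Banach's theorem on `𝒢`, a closed subspace of
`C([x 0, x N], ℝ)`, gives the unique fixed point. Evaluating its self-similarity equation at
`t = x N` gives `g (x n) = G_n (x N, y N) = y n`.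
-/

open Set

namespace ReadBajraktarevic

/-- The space `𝒢`. -/
def endpointClass (p q α β : ℝ) : Set (ℝ → ℝ) :=
  {g | ContinuousOn g (Icc p q) ∧ g p = α ∧ g q = β}

variable {p q α β : ℝ}

lemma exists_mem_endpointClass (hpq : p < q) : ∃ g, g ∈ endpointClass p q α β := by
  refine ⟨fun s => α + (s - p) / (q - p) * (β - α), by fun_prop, by simp, ?_⟩
  simp [div_self (sub_pos.2 hpq).ne']

lemma eqOn_apply_of_eqOn {S : Set ℝ} {K : ℝ} {T : (ℝ → ℝ) → ℝ → ℝ}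
    (hTK : ∀ g h D, (∀ u ∈ S, |g u - h u| ≤ D) → ∀ s ∈ S, |T g s - T h s| ≤ K * D)
    {g h : ℝ → ℝ} (hgh : EqOn g h S) : EqOn (T g) (T h) S :=
  fun s hs => sub_eq_zero.1 <| abs_nonpos_iff.1 <| by
    simpa using hTK g h 0 (fun u hu => by simp [hgh hu]) s hs

theorem exists_unique_fixedOn_of_contraction {K : ℝ} (hpq : p < q) (hK : K < 1)
    {T : (ℝ → ℝ) → ℝ → ℝ} (hT : ∀ g ∈ endpointClass p q α β, T g ∈ endpointClass p q α β)
    (hTK : ∀ g h D, (∀ u ∈ Icc p q, |g u - h u| ≤ D) → ∀ s ∈ Icc p q, |T g s - T h s| ≤ K * D) :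
    ∃ g ∈ endpointClass p q α β, EqOn (T g) g (Icc p q) ∧
      ∀ g' ∈ endpointClass p q α β, EqOn (T g') g' (Icc p q) → EqOn g g' (Icc p q) := by
  let E : Set C(Icc p q, ℝ) :=
    {φ | φ ⟨p, left_mem_Icc.2 hpq.le⟩ = α ∧ φ ⟨q, right_mem_Icc.2 hpq.le⟩ = β}
  have : IsClosed E := ((isClosed_singleton.preimage (continuous_eval_const _)).inter
    (isClosed_singleton.preimage (continuous_eval_const _)))
  have : CompleteSpace E := this.completeSpace_coe
  let ext (φ : E) : ℝ → ℝ := IccExtend hpq.le (φ : C(Icc p q, ℝ))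
  have ext_mem (φ : E) : ext φ ∈ endpointClass p q α β :=
    ⟨φ.1.continuous.Icc_extend'.continuousOn, by simpa [ext] using φ.2.1,
      by simpa [ext] using φ.2.2⟩
  let res (g : ℝ → ℝ) (hg : g ∈ endpointClass p q α β) : E :=
    ⟨⟨(Icc p q).domRestrict g, hg.1.domRestrict⟩, hg.2.1, hg.2.2⟩
  let Φ (φ : E) : E := res (T (ext φ)) (hT _ (ext_mem φ))
  have hΦ : ContractingWith K.toNNReal Φ := by
    refine ⟨Real.toNNReal_lt_one.2 hK, LipschitzWith.of_dist_le_mul fun φ ψ => ?_⟩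
    simp only [Subtype.dist_eq]
    refine (ContinuousMap.dist_le (mul_nonneg K.toNNReal.2 dist_nonneg)).2 fun ⟨s, hs⟩ => ?_
    refine (hTK _ _ _ (fun u hu => ?_) s hs).trans
      (mul_le_mul_of_nonneg_right (Real.le_coe_toNNReal K) dist_nonneg)
    simpa [ext, IccExtend_of_mem _ _ hu, ← Real.dist_eq] using
      ContinuousMap.dist_apply_le_dist (f := φ.1) (g := ψ.1) ⟨u, hu⟩
  have ext_res (g : ℝ → ℝ) (hg) : EqOn (ext (res g hg)) g (Icc p q) := fun s hs => by
    simp [ext, res, IccExtend_of_mem _ _ hs]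
  have isFixedPt_res_iff (g : ℝ → ℝ) (hg) :
      Function.IsFixedPt Φ (res g hg) ↔ EqOn (T g) g (Icc p q) := by
    simp only [Function.IsFixedPt, Φ, Subtype.ext_iff, ContinuousMap.ext_iff, Subtype.forall]
    exact ⟨fun h s hs => (eqOn_apply_of_eqOn hTK (ext_res g hg) hs).symm.trans (h s hs),
      fun h s hs => (eqOn_apply_of_eqOn hTK (ext_res g hg) hs).trans (h hs)⟩
  obtain ⟨g₀, hg₀⟩ := exists_mem_endpointClass (α := α) (β := β) hpq
  obtain ⟨φ, hφ, -⟩ := hΦ.exists_fixedPoint (res g₀ hg₀) (edist_ne_top _ _)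
  have res_ext : res (ext φ) (ext_mem φ) = φ := by ext; simp [ext, res]
  refine ⟨ext φ, ext_mem φ, ?_, fun g' hg' hfix s hs => ?_⟩
  · rw [← isFixedPt_res_iff _ (ext_mem φ), res_ext]
    exact hφ
  · rw [← ext_res g' hg' hs, hΦ.fixedPoint_unique' hφ ((isFixedPt_res_iff g' hg').2 hfix)]

section Cells

variable {N n m : ℕ} {x : ℕ → ℝ} {s : ℝ}

lemma exists_mem_cell (hN : 1 ≤ N) (hs : s ∈ Icc (x 0) (x N)) :
    ∃ n ∈ Finset.Icc 1 N, s ∈ Icc (x (n - 1)) (x n) := by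
  induction N, hN using Nat.le_induction with
  | base => exact ⟨1, by simp, hs⟩
  | succ N hN ih =>
    by_cases hsN : s ≤ x N
    · obtain ⟨n, hn, hsn⟩ := ih ⟨hs.1, hsN⟩
      exact ⟨n, by grind, hsn⟩
    · exact ⟨N + 1, by simp, le_of_not_ge hsN, hs.2⟩

lemma cell_subset (hx : MonotoneOn x (Iic N)) (hn : n ∈ Finset.Icc 1 N) :
    Icc (x (n - 1)) (x n) ⊆ Icc (x 0) (x N) := by
  rw [Finset.mem_Icc] at hn
  exact Icc_subset_Icc (hx (by simp) (by simp; omega) (Nat.zero_le _))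
    (hx (by simpa using hn.2) (by simp) hn.2)

lemma eq_of_mem_cell_of_mem_cell (hx : StrictMonoOn x (Iic N)) (hm : m ≤ N) (hnm : n < m)
    (hsn : s ∈ Icc (x (n - 1)) (x n)) (hsm : s ∈ Icc (x (m - 1)) (x m)) :
    m = n + 1 ∧ s = x n := by
  have hmn : m - 1 ≤ n := (hx.le_iff_le (by simp; omega) (by simp; omega)).1 (hsm.1.trans hsn.2)
  have hm' : m = n + 1 := by omega
  subst hm'
  exact ⟨rfl, le_antisymm hsn.2 (by simpa using hsm.1)⟩

/-- Some `n ∈ [1, N]` with `s ∈ Icc (x (n - 1)) (x n)`; cells meet only at nodes, where the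
pieces of the operator agree, so the choice is immaterial. -/
noncomputable def cellIndex (N : ℕ) (x : ℕ → ℝ) (s : ℝ) : ℕ :=
  Classical.epsilon fun n => n ∈ Finset.Icc 1 N ∧ s ∈ Icc (x (n - 1)) (x n)

lemma cellIndex_spec (hN : 1 ≤ N) (hs : s ∈ Icc (x 0) (x N)) :
    cellIndex N x s ∈ Finset.Icc 1 N ∧
      s ∈ Icc (x (cellIndex N x s - 1)) (x (cellIndex N x s)) :=
  Classical.epsilon_spec (p := fun n => n ∈ Finset.Icc 1 N ∧ s ∈ Icc (x (n - 1)) (x n))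
    (by simpa only [exists_prop] using exists_mem_cell hN hs)

end Cells

section Operator

variable {N n m : ℕ} {x y a b e γ f : ℕ → ℝ} {g h : ℝ → ℝ} {s t : ℝ}

lemma affine_mem_Icc_iff {a b t u v : ℝ} (ha : 0 < a) :
    a * t + b ∈ Icc (a * u + b) (a * v + b) ↔ t ∈ Icc u v := by
  simp [mul_le_mul_iff_of_pos_left ha]

lemma div_mem_Icc_of_mem_cell (ha : 0 < a n) (hL0 : a n * x 0 + b n = x (n - 1))
    (hLN : a n * x N + b n = x n) (hs : s ∈ Icc (x (n - 1)) (x n)) :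
    (s - b n) / a n ∈ Icc (x 0) (x N) := by
  rw [← affine_mem_Icc_iff ha, hL0, hLN, mul_div_cancel₀ _ ha.ne', sub_add_cancel]
  exact hs

/-- `G_n ∘ (id, g) ∘ L_n⁻¹`, where `L_n t = a n * t + b n` and
`G_n (t, u) = e n * t + γ n * u + f n`. -/
noncomputable def piece (a b e γ f : ℕ → ℝ) (g : ℝ → ℝ) (n : ℕ) (s : ℝ) : ℝ :=
  e n * ((s - b n) / a n) + γ n * g ((s - b n) / a n) + f n

lemma piece_affine (ha : a n ≠ 0) (t : ℝ) :
    piece a b e γ f g n (a n * t + b n) = e n * t + γ n * g t + f n := by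
  simp only [piece, add_sub_cancel_right, mul_div_cancel_left₀ _ ha]

lemma continuousOn_piece (ha : 0 < a n) (hL0 : a n * x 0 + b n = x (n - 1))
    (hLN : a n * x N + b n = x n) (hg : ContinuousOn g (Icc (x 0) (x N))) :
    ContinuousOn (piece a b e γ f g n) (Icc (x (n - 1)) (x n)) := by
  have hu : ContinuousOn (fun s => (s - b n) / a n) (Icc (x (n - 1)) (x n)) := by fun_prop
  have hgu := hg.comp hu fun s hs => div_mem_Icc_of_mem_cell ha hL0 hLN hs
  exact ((continuousOn_const.mul hu).add (continuousOn_const.mul hgu)).add continuousOn_const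

lemma affine_mem_cell (ha : 0 < a n) (hL0 : a n * x 0 + b n = x (n - 1))
    (hLN : a n * x N + b n = x n) (ht : t ∈ Icc (x 0) (x N)) :
    a n * t + b n ∈ Icc (x (n - 1)) (x n) := by
  rw [← hL0, ← hLN]
  exact (affine_mem_Icc_iff ha).2 ht

lemma piece_left (ha : a n ≠ 0) (hL0 : a n * x 0 + b n = x (n - 1))
    (hjoin0 : e n * x 0 + γ n * y 0 + f n = y (n - 1)) (hg0 : g (x 0) = y 0) :
    piece a b e γ f g n (x (n - 1)) = y (n - 1) := by
  rw [← hL0, piece_affine ha, hg0, hjoin0]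

lemma piece_right (ha : a n ≠ 0) (hLN : a n * x N + b n = x n)
    (hjoinN : e n * x N + γ n * y N + f n = y n) (hgN : g (x N) = y N) :
    piece a b e γ f g n (x n) = y n := by
  rw [← hLN, piece_affine ha, hgN, hjoinN]

structure IsInterpolationData (N : ℕ) (x y a b e γ f : ℕ → ℝ) : Prop where
  one_le : 1 ≤ N
  strictMonoOn : StrictMonoOn x (Iic N)
  pos : ∀ n ∈ Finset.Icc 1 N, 0 < a n
  affine_left : ∀ n ∈ Finset.Icc 1 N, a n * x 0 + b n = x (n - 1)
  affine_right : ∀ n ∈ Finset.Icc 1 N, a n * x N + b n = x n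
  join_left : ∀ n ∈ Finset.Icc 1 N, e n * x 0 + γ n * y 0 + f n = y (n - 1)
  join_right : ∀ n ∈ Finset.Icc 1 N, e n * x N + γ n * y N + f n = y n

/-- The Read–Bajraktarević operator `(T g) (L_n t) = G_n (t, g t)`. -/
noncomputable def operator (N : ℕ) (x a b e γ f : ℕ → ℝ) (g : ℝ → ℝ) (s : ℝ) : ℝ :=
  piece a b e γ f g (cellIndex N x s) s

lemma abs_operator_sub_le (hN : 1 ≤ N) (ha : ∀ n ∈ Finset.Icc 1 N, 0 < a n)
    (hL0 : ∀ n ∈ Finset.Icc 1 N, a n * x 0 + b n = x (n - 1))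
    (hLN : ∀ n ∈ Finset.Icc 1 N, a n * x N + b n = x n)
    {K D : ℝ} (hK : ∀ n ∈ Finset.Icc 1 N, |γ n| ≤ K)
    (hD : ∀ u ∈ Icc (x 0) (x N), |g u - h u| ≤ D) (hs : s ∈ Icc (x 0) (x N)) :
    |operator N x a b e γ f g s - operator N x a b e γ f h s| ≤ K * D := by
  obtain ⟨hn, hsn⟩ := cellIndex_spec hN hs
  set n := cellIndex N x s
  set u := (s - b n) / a n
  have hu : u ∈ Icc (x 0) (x N) := div_mem_Icc_of_mem_cell (ha n hn) (hL0 n hn) (hLN n hn) hsn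
  calc |operator N x a b e γ f g s - operator N x a b e γ f h s|
      = |γ n| * |g u - h u| := by
        rw [← abs_mul]
        congr 1
        simp only [operator, piece]
        ring
    _ ≤ K * D := mul_le_mul (hK n hn) (hD u hu) (abs_nonneg _) ((abs_nonneg _).trans (hK n hn))

namespace IsInterpolationData

variable (H : IsInterpolationData N x y a b e γ f)
include H

lemma piece_eq_piece_of_lt (hg : g ∈ endpointClass (x 0) (x N) (y 0) (y N))
    (hn : n ∈ Finset.Icc 1 N) (hm : m ∈ Finset.Icc 1 N) (hnm : n < m)
    (hsn : s ∈ Icc (x (n - 1)) (x n)) (hsm : s ∈ Icc (x (m - 1)) (x m)) :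
    piece a b e γ f g n s = piece a b e γ f g m s := by
  obtain ⟨rfl, rfl⟩ :=
    eq_of_mem_cell_of_mem_cell H.strictMonoOn (Finset.mem_Icc.1 hm).2 hnm hsn hsm
  rw [piece_right (H.pos n hn).ne' (H.affine_right n hn) (H.join_right n hn) hg.2.2]
  simpa using (piece_left (H.pos _ hm).ne' (H.affine_left _ hm) (H.join_left _ hm) hg.2.1).symm

lemma operator_eq_piece (hg : g ∈ endpointClass (x 0) (x N) (y 0) (y N))
    (hn : n ∈ Finset.Icc 1 N) (hs : s ∈ Icc (x (n - 1)) (x n)) :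
    operator N x a b e γ f g s = piece a b e γ f g n s := by
  obtain ⟨hm, hsm⟩ := cellIndex_spec H.one_le (cell_subset H.strictMonoOn.monotoneOn hn hs)
  rcases lt_trichotomy (cellIndex N x s) n with hlt | heq | hlt
  · exact H.piece_eq_piece_of_lt hg hm hn hlt hsm hs
  · rw [operator, heq]
  · exact (H.piece_eq_piece_of_lt hg hn hm hlt hs hsm).symm

lemma continuousOn_operator (hg : g ∈ endpointClass (x 0) (x N) (y 0) (y N)) :
    ContinuousOn (operator N x a b e γ f g) (Icc (x 0) (x N)) := by
  have hcover : Icc (x 0) (x N) ⊆ ⋃ n : Finset.Icc 1 N, Icc (x (n - 1)) (x n) := fun s hs => by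
    obtain ⟨n, hn, hsn⟩ := exists_mem_cell H.one_le hs
    exact mem_iUnion.2 ⟨⟨n, hn⟩, hsn⟩
  refine (LocallyFinite.continuousOn_iUnion (locallyFinite_of_finite _) (fun _ => isClosed_Icc)
    fun ⟨n, hn⟩ => ?_).mono hcover
  exact (continuousOn_piece (H.pos n hn) (H.affine_left n hn) (H.affine_right n hn) hg.1).congr
    fun s hs => H.operator_eq_piece hg hn hs

lemma operator_mem_endpointClass (hg : g ∈ endpointClass (x 0) (x N) (y 0) (y N)) :
    operator N x a b e γ f g ∈ endpointClass (x 0) (x N) (y 0) (y N) := by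
  have h1 : 1 ∈ Finset.Icc 1 N := Finset.mem_Icc.2 ⟨le_rfl, H.one_le⟩
  have hN : N ∈ Finset.Icc 1 N := Finset.mem_Icc.2 ⟨H.one_le, le_rfl⟩
  have hmono := H.strictMonoOn.monotoneOn
  refine ⟨H.continuousOn_operator hg, ?_, ?_⟩
  · rw [H.operator_eq_piece hg h1 ⟨le_rfl, hmono (by simp) (by simpa using H.one_le) zero_le_one⟩]
    simpa using piece_left (H.pos 1 h1).ne' (H.affine_left 1 h1) (H.join_left 1 h1) hg.2.1
  · rw [H.operator_eq_piece hg hN ⟨hmono (by simp) (by simp) (Nat.sub_le N 1), le_rfl⟩]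
    exact piece_right (H.pos N hN).ne' (H.affine_right N hN) (H.join_right N hN) hg.2.2

lemma operator_affine (hg : g ∈ endpointClass (x 0) (x N) (y 0) (y N))
    (hn : n ∈ Finset.Icc 1 N) (ht : t ∈ Icc (x 0) (x N)) :
    operator N x a b e γ f g (a n * t + b n) = e n * t + γ n * g t + f n := by
  rw [H.operator_eq_piece hg hn (affine_mem_cell (H.pos n hn) (H.affine_left n hn)
    (H.affine_right n hn) ht), piece_affine (H.pos n hn).ne']

lemma eqOn_operator_iff (hg : g ∈ endpointClass (x 0) (x N) (y 0) (y N)) :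
    EqOn (operator N x a b e γ f g) g (Icc (x 0) (x N)) ↔
      ∀ n ∈ Finset.Icc 1 N, ∀ t ∈ Icc (x 0) (x N),
        g (a n * t + b n) = e n * t + γ n * g t + f n := by
  constructor
  · intro hfix n hn t ht
    have hLt := affine_mem_cell (H.pos n hn) (H.affine_left n hn) (H.affine_right n hn) ht
    rw [← H.operator_affine hg hn ht]
    exact (hfix (cell_subset H.strictMonoOn.monotoneOn hn hLt)).symm
  · intro hfun s hs
    obtain ⟨n, hn, hsn⟩ := exists_mem_cell H.one_le hs
    have hu := div_mem_Icc_of_mem_cell (H.pos n hn) (H.affine_left n hn) (H.affine_right n hn) hsn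
    have hs' : a n * ((s - b n) / a n) + b n = s := by
      rw [mul_div_cancel₀ _ (H.pos n hn).ne', sub_add_cancel]
    rw [← hs', H.operator_affine hg hn hu, hfun n hn _ hu]

lemma apply_node_eq (hg : g ∈ endpointClass (x 0) (x N) (y 0) (y N))
    (hfun : ∀ n ∈ Finset.Icc 1 N, ∀ t ∈ Icc (x 0) (x N),
      g (a n * t + b n) = e n * t + γ n * g t + f n) (hn : n ≤ N) :
    g (x n) = y n := by
  rcases n with _ | n
  · exact hg.2.1
  · have hn' : n + 1 ∈ Finset.Icc 1 N := Finset.mem_Icc.2 ⟨by omega, hn⟩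
    have hxN : x N ∈ Icc (x 0) (x N) :=
      right_mem_Icc.2 (H.strictMonoOn.monotoneOn (by simp) (by simp) (Nat.zero_le N))
    rw [← H.affine_right _ hn', hfun _ hn' _ hxN, hg.2.2, H.join_right _ hn']

end IsInterpolationData

end Operator

end ReadBajraktarevic

open ReadBajraktarevic

/-- (single IFS, M = 1) The Read-Bajraktarevic operator
`(Tg)(L n t) = G n (t, g t)` is well defined on the space `𝒢` of continuous
functions on `I` with prescribed endpoint values, is a contraction with ratio
`max_n |γ n| < 1`, and its unique fixed point `g` interpolates the data:
`g (x n) = y n` for all `n`. -/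
theorem stmt_6 (N : ℕ) (hN : 1 ≤ N) (x y : ℕ → ℝ)
    (hx : ∀ i, i < N → x i < x (i + 1))
    (a b e γ f : ℕ → ℝ)
    (ha : ∀ n ∈ Finset.Icc 1 N, 0 < a n)
    (L : ℕ → ℝ → ℝ) (hL : ∀ n t, L n t = a n * t + b n)
    (hL0 : ∀ n ∈ Finset.Icc 1 N, L n (x 0) = x (n - 1))
    (hLN : ∀ n ∈ Finset.Icc 1 N, L n (x N) = x n)
    (hγ : ∀ n ∈ Finset.Icc 1 N, |γ n| < 1)
    (hjoin0 : ∀ n ∈ Finset.Icc 1 N, e n * x 0 + γ n * y 0 + f n = y (n - 1))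
    (hjoinN : ∀ n ∈ Finset.Icc 1 N, e n * x N + γ n * y N + f n = y n) :
    -- (i) T is well defined: Tg is continuous and has the right endpoint values
    (∀ g : ℝ → ℝ, ContinuousOn g (Icc (x 0) (x N)) →
        g (x 0) = y 0 → g (x N) = y N →
      ∃ Tg : ℝ → ℝ, ContinuousOn Tg (Icc (x 0) (x N)) ∧
        Tg (x 0) = y 0 ∧ Tg (x N) = y N ∧
        ∀ n ∈ Finset.Icc 1 N, ∀ t ∈ Icc (x 0) (x N),
          Tg (L n t) = e n * t + γ n * g t + f n) ∧
    -- (ii) T is a contraction with ratio `max_n |γ n| < 1`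
    ((Finset.Icc 1 N).sup' (Finset.nonempty_Icc.mpr hN) (fun n => |γ n|) < 1 ∧
      ∀ g h : ℝ → ℝ, ∀ n ∈ Finset.Icc 1 N, ∀ t ∈ Icc (x 0) (x N),
        |(e n * t + γ n * g t + f n) - (e n * t + γ n * h t + f n)| ≤
          (Finset.Icc 1 N).sup' (Finset.nonempty_Icc.mpr hN)
            (fun n => |γ n|) * |g t - h t|) ∧
    -- (iii) unique fixed point, which interpolates the data
    (∃ g : ℝ → ℝ, (ContinuousOn g (Icc (x 0) (x N)) ∧
        g (x 0) = y 0 ∧ g (x N) = y N ∧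
        (∀ n ∈ Finset.Icc 1 N, ∀ t ∈ Icc (x 0) (x N),
          g (L n t) = e n * t + γ n * g t + f n)) ∧
      (∀ n ≤ N, g (x n) = y n) ∧
      ∀ g' : ℝ → ℝ, (ContinuousOn g' (Icc (x 0) (x N)) ∧
        g' (x 0) = y 0 ∧ g' (x N) = y N ∧
        (∀ n ∈ Finset.Icc 1 N, ∀ t ∈ Icc (x 0) (x N),
          g' (L n t) = e n * t + γ n * g' t + f n)) →
        EqOn g g' (Icc (x 0) (x N))) := by
  simp only [hL] at hL0 hLN ⊢
  have H : IsInterpolationData N x y a b e γ f :=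
    ⟨hN, strictMonoOn_Iic_of_lt_succ fun i hi => by simpa using hx i hi, ha, hL0, hLN,
      hjoin0, hjoinN⟩
  set K := (Finset.Icc 1 N).sup' (Finset.nonempty_Icc.mpr hN) fun n => |γ n|
  have hK : K < 1 := (Finset.sup'_lt_iff _).2 hγ
  have hγK : ∀ n ∈ Finset.Icc 1 N, |γ n| ≤ K := fun n hn => Finset.le_sup' (fun n => |γ n|) hn
  have hlt : x 0 < x N := H.strictMonoOn (by simp) (by simp) (by omega)
  obtain ⟨g, hg, hfix, huniq⟩ :=
    exists_unique_fixedOn_of_contraction hlt hK (fun _ => H.operator_mem_endpointClass)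
      fun g h D hD s hs => abs_operator_sub_le hN ha hL0 hLN hγK hD hs
  have hfun := (H.eqOn_operator_iff hg).1 hfix
  refine ⟨fun g hgC hg0 hgN => ?_, ⟨hK, fun g h n hn t _ => ?_⟩,
    ⟨g, ⟨hg.1, hg.2.1, hg.2.2, hfun⟩, fun n hn => H.apply_node_eq hg hfun hn,
      fun g' ⟨hg'C, hg'0, hg'N, hfun'⟩ => huniq g' ⟨hg'C, hg'0, hg'N⟩ ?_⟩⟩
  · obtain ⟨hTC, hT0, hTN⟩ := H.operator_mem_endpointClass ⟨hgC, hg0, hgN⟩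
    exact ⟨_, hTC, hT0, hTN, fun n hn t ht => H.operator_affine ⟨hgC, hg0, hgN⟩ hn ht⟩
  · rw [show ∀ u v : ℝ, e n * t + γ n * u + f n - (e n * t + γ n * v + f n) = γ n * (u - v)
      from fun _ _ => by ring, abs_mul]
    exact mul_le_mul_of_nonneg_right (hγK n hn) (abs_nonneg _)
  · exact (H.eqOn_operator_iff ⟨hg'C, hg'0, hg'N⟩).2 hfun'
end

section
/- (Theorem 2.1) Let $S_0 = \{(x_i, y_i) : i = 0, \ldots, N\}$ be interpolation data with $x_0 < \cdots < x_N$, and let the SIFS consist of maps $\omega_{n,k}(x,y) = (L_n(x), G_{n,k}(x,y))$, $n = 1, \ldots, N$, $k = 1, \ldots, M$, where $G_{n,k}(x,y) = e_{n,k} x + \gamma_{n,k} y + f_{n,k}$ with $|\gamma_{n,k}| < 1$ and join-up conditions $G_{n,k}(x_0, y_0) = y_{n-1}$, $G_{n,k}(x_N, y_N) = y_n$. For $\sigma \in \Lambda$, let $G_{\sigma} = \lim_{k \to \infty} W_{\sigma_k} \circ \cdots \circ W_{\sigma_1}(S_0)$ be the attractor (limit in the Hausdorff metric), where $W_k(A)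 = \bigcup_{n=1}^N \omega_{n,k}(A)$. Then $G_{\sigma}$ is the graph of a continuous function $g_{\sigma} : I \to \mathbb{R}$ satisfying $g_{\sigma}(x_n) = y_n$ for all $n = 0, \ldots, N$. -/
/-!
All iterates `S k` lie in a fixed strip `I × [-B, B]` and contain the interpolation points.
The heart of the proof is a modulus of continuity that is uniform in `k`. Let `E` bound the
`|e n k|`, `c < 1` the `|γ n k|`, `r` the slopes `a n` from below and `δ` the cell lengths from
below. Two points of `S (m + j)` whose abscissae differ by less than `r ^ j * δ` have ordinates
differing by at most `2 V j`, where `V (j + 1) = E r ^ j δ + c V j` tends to `0`. By induction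
on `j`: two such points either come from the same cell, and the map contracts their vertical
distance by `c`, or from adjacent cells, and then both are close to the common node, the image
of an endpoint by the join-up conditions. This modulus passes to the Hausdorff limit, which is
therefore the graph of a uniformly continuous function; its projection is all of `I`, since the
cells of level `k` have length at most `(max aₙ) ^ k |I|`, and it contains the interpolation
points.
-/

open Set Metric Filter Topology

lemma Finset.exists_lt_forall_le_of_forall_lt {ι β : Type*} [LinearOrder β] [NoMinOrder β]
    {s : Finset ι} {f : ι → β} {C : β} (h : ∀ i ∈ s, f i < C) :
    ∃ c < C, ∀ i ∈ s, f i ≤ c := by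
  rcases s.eq_empty_or_nonempty with rfl | hs
  · obtain ⟨c, hc⟩ := exists_lt C
    exact ⟨c, hc, by simp⟩
  · exact ⟨s.sup' hs f, (Finset.sup'_lt_iff hs).2 h, fun i hi => Finset.le_sup' f hi⟩

lemma Finset.exists_gt_forall_ge_of_forall_gt {ι β : Type*} [LinearOrder β] [NoMaxOrder β]
    {s : Finset ι} {f : ι → β} {C : β} (h : ∀ i ∈ s, C < f i) :
    ∃ c > C, ∀ i ∈ s, c ≤ f i :=
  Finset.exists_lt_forall_le_of_forall_lt (β := βᵒᵈ) h

lemma eventually_lt_of_le_mul_add {u ε : ℕ → ℝ} {c η : ℝ} (hc0 : 0 ≤ c) (hc1 : c < 1)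
    (hu : ∀ n, u (n + 1) ≤ c * u n + ε n) (hε : Tendsto ε atTop (𝓝 0)) (hη : 0 < η) :
    ∀ᶠ n in atTop, u n < η := by
  obtain ⟨n₀, hn₀⟩ := eventually_atTop.1
    (hε.eventually (ge_mem_nhds (by positivity : 0 < (1 - c) * (η / 2))))
  -- for `n ≥ n₀` the map `v ↦ c * v + ε n` sends `η / 2` below itself
  have hbound : ∀ k, u (n₀ + k) ≤ c ^ k * u n₀ + η / 2 := by
    intro k
    induction k with
    | zero => simp only [add_zero, pow_zero, one_mul]; linarith
    | succ k ih =>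
      calc u (n₀ + (k + 1)) ≤ c * u (n₀ + k) + ε (n₀ + k) := hu (n₀ + k)
        _ ≤ c * (c ^ k * u n₀ + η / 2) + (1 - c) * (η / 2) := by
          gcongr
          exact hn₀ _ (Nat.le_add_right _ _)
        _ = c ^ (k + 1) * u n₀ + η / 2 := by ring
  obtain ⟨k₀, hk₀⟩ := eventually_atTop.1
    (((tendsto_pow_atTop_nhds_zero_of_lt_one hc0 hc1).mul_const (u n₀)).eventually
      (gt_mem_nhds (show 0 * u n₀ < η / 2 by simpa using half_pos hη)))
  refine eventually_atTop.2 ⟨n₀ + k₀, fun n hn => ?_⟩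
  obtain ⟨k, rfl⟩ := Nat.exists_eq_add_of_le (le_of_add_le_left hn)
  linarith [hbound k, hk₀ k (by omega)]

lemma eq_or_eq_succ_of_mem_Icc_of_abs_sub_lt {x : ℕ → ℝ} {N n i : ℕ} {δ t : ℝ}
    (hx : MonotoneOn x (Iic N)) (hδ : ∀ m ∈ Finset.Icc 1 N, δ ≤ x m - x (m - 1))
    (hn : n ∈ Finset.Icc 1 N) (hi : i ≤ N) (ht : t ∈ Icc (x (n - 1)) (x n)) (hti : |t - x i| < δ) :
    n = i ∨ n = i + 1 := by
  rw [Finset.mem_Icc] at hn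
  rw [abs_lt] at hti
  by_contra hne
  rcases Nat.lt_or_gt_of_ne (show n ≠ i by omega) with hlt | hgt
  · have h1 : x n ≤ x (i - 1) := hx (mem_Iic.2 (by omega)) (mem_Iic.2 (by omega)) (by omega)
    have h2 := hδ i (Finset.mem_Icc.2 ⟨by omega, hi⟩)
    linarith [ht.2]
  · have h1 : x (i + 1) ≤ x (n - 1) := hx (mem_Iic.2 (by omega)) (mem_Iic.2 (by omega)) (by omega)
    have h2 := hδ (i + 1) (Finset.mem_Icc.2 ⟨by omega, by omega⟩)
    simp only [Nat.add_sub_cancel] at h2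
    linarith [ht.1]

lemma exists_mem_Icc_pred_of_mem_Icc {x : ℕ → ℝ} {N : ℕ} (hN : 1 ≤ N) {t : ℝ}
    (ht : t ∈ Icc (x 0) (x N)) : ∃ n ∈ Finset.Icc 1 N, t ∈ Icc (x (n - 1)) (x n) := by
  classical
  have hex : ∃ n, 1 ≤ n ∧ t ≤ x n := ⟨N, hN, ht.2⟩
  set n := Nat.find hex
  obtain ⟨hn1, htn⟩ := Nat.find_spec hex
  refine ⟨n, Finset.mem_Icc.2 ⟨hn1, Nat.find_min' hex ⟨hN, ht.2⟩⟩, ?_, htn⟩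
  rcases eq_or_lt_of_le hn1 with hn | hn
  · rw [show n - 1 = 0 by omega]; exact ht.1
  · have := Nat.find_min hex (show n - 1 < n by omega)
    exact (not_le.1 fun h' => this ⟨by omega, h'⟩).le

section VerticalOscillation

variable {α β : Type*} [PseudoMetricSpace α] [PseudoMetricSpace β]

def VertDistLE (A : Set (α × β)) (z : α × β) (δ ε : ℝ) : Prop :=
  ∀ p ∈ A, dist p.1 z.1 < δ → dist p.2 z.2 ≤ ε

def OscLE (A : Set (α × β)) (δ ε : ℝ) : Prop :=
  ∀ z ∈ A, VertDistLE A z δ ε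

lemma dist_fst_le_dist (p q : α × β) : dist p.1 q.1 ≤ dist p q :=
  (le_max_left _ _).trans Prod.dist_eq.ge

lemma dist_snd_le_dist (p q : α × β) : dist p.2 q.2 ≤ dist p q :=
  (le_max_right _ _).trans Prod.dist_eq.ge

lemma VertDistLE.image {A : Set (α × β)} {z : α × β} {δ ε r E c : ℝ} {f : α × β → α × β}
    (h : VertDistLE A z δ ε) (hr : 0 < r) (hE : 0 ≤ E) (hc : 0 ≤ c)
    (hf₁ : ∀ p q, r * dist p.1 q.1 ≤ dist (f p).1 (f q).1)
    (hf₂ : ∀ p q, dist (f p).2 (f q).2 ≤ E * dist p.1 q.1 + c * dist p.2 q.2) :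
    VertDistLE (f '' A) (f z) (r * δ) (E * δ + c * ε) := by
  rintro _ ⟨p, hp, rfl⟩ hpz
  have hδ : dist p.1 z.1 < δ := lt_of_mul_lt_mul_left ((hf₁ p z).trans_lt hpz) hr.le
  calc dist (f p).2 (f z).2 ≤ E * dist p.1 z.1 + c * dist p.2 z.2 := hf₂ p z
    _ ≤ E * δ + c * ε := by gcongr; exact h p hp hδ

lemma OscLE.mono {A : Set (α × β)} {δ δ' ε ε' : ℝ} (h : OscLE A δ ε) (hδ : δ' ≤ δ)
    (hε : ε ≤ ε') : OscLE A δ' ε' :=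
  fun z hz p hp hpz => (h z hz p hp (hpz.trans_le hδ)).trans hε

lemma OscLE.of_hausdorffDist_lt {A G : Set (α × β)} {δ ε η : ℝ} (h : OscLE A δ ε)
    (hfin : hausdorffEDist A G ≠ ⊤) (hAG : hausdorffDist A G < η) :
    OscLE G (δ - 2 * η) (ε + 2 * η) := by
  intro z hz p hp hpz
  obtain ⟨z', hz', hzz'⟩ := exists_dist_lt_of_hausdorffDist_lt' hz hAG hfin
  obtain ⟨p', hp', hpp'⟩ := exists_dist_lt_of_hausdorffDist_lt' hp hAG hfin
  have hp'z' : dist p'.1 z'.1 < δ := by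
    calc dist p'.1 z'.1 ≤ dist p'.1 p.1 + dist p.1 z.1 + dist z.1 z'.1 := dist_triangle4 _ _ _ _
      _ < η + (δ - 2 * η) + η := by
        gcongr
        · exact (dist_fst_le_dist p' p).trans_lt hpp'
        · exact (dist_comm z'.1 z.1 ▸ dist_fst_le_dist z' z).trans_lt hzz'
      _ = δ := by ring
  calc dist p.2 z.2 ≤ dist p.2 p'.2 + dist p'.2 z'.2 + dist z'.2 z.2 := dist_triangle4 _ _ _ _
    _ ≤ η + ε + η := by
      gcongr
      · exact (dist_comm p'.2 p.2 ▸ dist_snd_le_dist p' p).trans hpp'.le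
      · exact h z' hz' p' hp' hp'z'
      · exact ((dist_snd_le_dist z' z).trans_lt hzz').le
    _ = ε + 2 * η := by ring

lemma oscLE_of_tendsto_hausdorffDist {A : ℕ → Set (α × β)} {G : Set (α × β)}
    (hfin : ∀ k, hausdorffEDist (A k) G ≠ ⊤)
    (hlim : Tendsto (fun k => hausdorffDist (A k) G) atTop (𝓝 0))
    (hA : ∀ ε > 0, ∃ δ > 0, ∀ᶠ k in atTop, OscLE (A k) δ ε) :
    ∀ ε > 0, ∃ δ > 0, OscLE G δ ε := by
  intro ε hε
  obtain ⟨δ, hδ, hAδ⟩ := hA (ε / 2) (half_pos hε)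
  set η := min (δ / 4) (ε / 4)
  have hη : 0 < η := lt_min (by positivity) (by positivity)
  obtain ⟨k, hk, hkG⟩ := (hAδ.and (hlim.eventually (gt_mem_nhds hη))).exists
  refine ⟨δ / 2, half_pos hδ, (hk.of_hausdorffDist_lt (hfin k) hkG).mono ?_ ?_⟩
  · linarith [min_le_left (δ / 4) (ε / 4)]
  · linarith [min_le_right (δ / 4) (ε / 4)]

end VerticalOscillation

lemma exists_continuousOn_graph_eq {α β : Type*} [PseudoMetricSpace α] [MetricSpace β]
    [Nonempty β] {s : Set α} {G : Set (α × β)}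
    (hGs : ∀ p ∈ G, p.1 ∈ s) (hsG : ∀ t ∈ s, ∃ u, (t, u) ∈ G)
    (hosc : ∀ ε > 0, ∃ δ > 0, OscLE G δ ε) :
    ∃ g : α → β, ContinuousOn g s ∧ G = {p | p.1 ∈ s ∧ p.2 = g p.1} := by
  set g : α → β := fun t => Classical.epsilon fun u => (t, u) ∈ G
  have hg : ∀ t ∈ s, (t, g t) ∈ G := fun t ht => Classical.epsilon_spec (hsG t ht)
  have hunique : ∀ p ∈ G, p.2 = g p.1 := by
    intro p hp
    refine eq_of_forall_dist_le fun ε hε => ?_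
    obtain ⟨δ, hδ, hG⟩ := hosc ε hε
    exact hG _ (hg p.1 (hGs p hp)) p hp (by simpa using hδ)
  refine ⟨g, ?_, ?_⟩
  · refine Metric.continuousOn_iff.2 fun t ht ε hε => ?_
    obtain ⟨δ, hδ, hG⟩ := hosc (ε / 2) (half_pos hε)
    exact ⟨δ, hδ, fun t' ht' htt' => (hG _ (hg t ht) _ (hg t' ht') htt').trans_lt (half_lt_self hε)⟩
  · ext p
    refine ⟨fun hp => ⟨hGs p hp, hunique p hp⟩, fun ⟨hp, hpg⟩ => ?_⟩
    simpa [← hpg] using hg p.1 hp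

section HausdorffLimit

variable {X : Type*} [PseudoMetricSpace X] {A : ℕ → Set X} {G : Set X}

lemma mem_of_forall_mem_of_tendsto_hausdorffDist {z : X} (hG : IsClosed G) (hGne : G.Nonempty)
    (hz : ∀ k, z ∈ A k) (hfin : ∀ k, hausdorffEDist (A k) G ≠ ⊤)
    (hlim : Tendsto (fun k => hausdorffDist (A k) G) atTop (𝓝 0)) : z ∈ G := by
  refine (hG.mem_iff_infDist_zero hGne).2 (le_antisymm ?_ infDist_nonneg)
  exact ge_of_tendsto' hlim fun k => infDist_le_hausdorffDist_of_mem (hz k) (hfin k)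

lemma subset_of_forall_subset_of_tendsto_hausdorffDist {C : Set X} (hC : IsClosed C)
    (hAC : ∀ k, A k ⊆ C) (hAne : ∀ k, (A k).Nonempty) (hfin : ∀ k, hausdorffEDist (A k) G ≠ ⊤)
    (hlim : Tendsto (fun k => hausdorffDist (A k) G) atTop (𝓝 0)) : G ⊆ C := by
  intro p hp
  refine (hC.mem_iff_infDist_zero ((hAne 0).mono (hAC 0))).2 (le_antisymm ?_ infDist_nonneg)
  refine ge_of_tendsto' hlim fun k => ?_
  calc infDist p C ≤ infDist p (A k) := infDist_le_infDist_of_subset (hAC k) (hAne k)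
    _ ≤ hausdorffDist G (A k) :=
      infDist_le_hausdorffDist_of_mem hp (by rw [hausdorffEDist_comm]; exact hfin k)
    _ = hausdorffDist (A k) G := hausdorffDist_comm

end HausdorffLimit

lemma exists_mem_fst_eq_of_tendsto_hausdorffDist {α β : Type*} [MetricSpace α]
    [PseudoMetricSpace β] {A : ℕ → Set (α × β)} {G : Set (α × β)} {t : α} (hG : IsCompact G)
    (hfin : ∀ k, hausdorffEDist (A k) G ≠ ⊤)
    (hlim : Tendsto (fun k => hausdorffDist (A k) G) atTop (𝓝 0))
    (hdense : ∀ η > 0, ∀ᶠ k in atTop, ∃ p ∈ A k, dist p.1 t < η) : ∃ u, (t, u) ∈ G := by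
  have ht : t ∈ closure (Prod.fst '' G) := by
    refine Metric.mem_closure_iff.2 fun η hη => ?_
    obtain ⟨k, ⟨p, hp, hpt⟩, hk⟩ :=
      ((hdense (η / 2) (half_pos hη)).and (hlim.eventually (gt_mem_nhds (half_pos hη)))).exists
    obtain ⟨q, hq, hpq⟩ := exists_dist_lt_of_hausdorffDist_lt hp hk (hfin k)
    refine ⟨q.1, ⟨q, hq, rfl⟩, ?_⟩
    calc dist t q.1 ≤ dist t p.1 + dist p.1 q.1 := dist_triangle _ _ _
      _ < η / 2 + η / 2 := by
        gcongr
        · rwa [dist_comm]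
        · exact (dist_fst_le_dist p q).trans_lt hpq
      _ = η := add_halves η
  rw [(hG.image continuous_fst).isClosed.closure_eq] at ht
  obtain ⟨q, hq, rfl⟩ := ht
  exact ⟨q.2, hq⟩

/-- `Φ k n` is the `n`-th map of the system applied at step `k + 1`. -/
structure IsFractalInterpolationSystem (N : ℕ) (x y a b : ℕ → ℝ) (E c : ℝ)
    (Φ : ℕ → ℕ → ℝ × ℝ → ℝ × ℝ) : Prop where
  one_le : 1 ≤ N
  node_lt : ∀ i < N, x i < x (i + 1)
  slope_pos : ∀ n ∈ Finset.Icc 1 N, 0 < a n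
  slope_lt_one : ∀ n ∈ Finset.Icc 1 N, a n < 1
  fst_apply : ∀ k n p, (Φ k n p).1 = a n * p.1 + b n
  dist_snd_le : ∀ k, ∀ n ∈ Finset.Icc 1 N, ∀ p q,
    dist (Φ k n p).2 (Φ k n q).2 ≤ E * dist p.1 q.1 + c * dist p.2 q.2
  apply_left : ∀ k, ∀ n ∈ Finset.Icc 1 N, Φ k n (x 0, y 0) = (x (n - 1), y (n - 1))
  apply_right : ∀ k, ∀ n ∈ Finset.Icc 1 N, Φ k n (x N, y N) = (x n, y n)
  lipschitz_nonneg : 0 ≤ E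
  contraction_nonneg : 0 ≤ c
  contraction_lt_one : c < 1

def interpOrbit (N : ℕ) (x y : ℕ → ℝ) (Φ : ℕ → ℕ → ℝ × ℝ → ℝ × ℝ) : ℕ → Set (ℝ × ℝ)
  | 0 => {p | ∃ i ≤ N, p = (x i, y i)}
  | k + 1 => ⋃ n ∈ Finset.Icc 1 N, Φ k n '' interpOrbit N x y Φ k

lemma mem_interpOrbit_succ {N k : ℕ} {x y : ℕ → ℝ} {Φ : ℕ → ℕ → ℝ × ℝ → ℝ × ℝ} {p : ℝ × ℝ} :
    p ∈ interpOrbit N x y Φ (k + 1) ↔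
      ∃ n ∈ Finset.Icc 1 N, ∃ q ∈ interpOrbit N x y Φ k, Φ k n q = p := by
  simp [interpOrbit]

def oscBound (V₀ E c r δ : ℝ) : ℕ → ℝ
  | 0 => V₀
  | j + 1 => E * (r ^ j * δ) + c * oscBound V₀ E c r δ j

namespace IsFractalInterpolationSystem

variable {N : ℕ} {x y a b : ℕ → ℝ} {E c : ℝ} {Φ : ℕ → ℕ → ℝ × ℝ → ℝ × ℝ}

lemma monotoneOn (h : IsFractalInterpolationSystem N x y a b E c Φ) : MonotoneOn x (Iic N) :=
  (strictMonoOn_Iic_of_lt_succ fun m hm => by simpa using h.node_lt m hm).monotoneOn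

lemma node_mem_Icc (h : IsFractalInterpolationSystem N x y a b E c Φ) {i : ℕ} (hi : i ≤ N) :
    x i ∈ Icc (x 0) (x N) :=
  ⟨h.monotoneOn (by simp) (by simpa) (Nat.zero_le i), h.monotoneOn (by simpa) (by simp) hi⟩

lemma fst_apply_mem_Icc (h : IsFractalInterpolationSystem N x y a b E c Φ) {k n : ℕ}
    (hn : n ∈ Finset.Icc 1 N) {p : ℝ × ℝ} (hp : p.1 ∈ Icc (x 0) (x N)) :
    (Φ k n p).1 ∈ Icc (x (n - 1)) (x n) := by
  have h₀ := congrArg Prod.fst (h.apply_left k n hn)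
  have h₁ := congrArg Prod.fst (h.apply_right k n hn)
  simp only [h.fst_apply] at h₀ h₁ ⊢
  have ha := h.slope_pos n hn
  constructor <;> nlinarith [hp.1, hp.2]

lemma dist_fst_apply (h : IsFractalInterpolationSystem N x y a b E c Φ) (k : ℕ) {n : ℕ}
    (hn : n ∈ Finset.Icc 1 N) (p q : ℝ × ℝ) :
    dist (Φ k n p).1 (Φ k n q).1 = a n * dist p.1 q.1 := by
  rw [h.fst_apply, h.fst_apply, Real.dist_eq, Real.dist_eq, ← abs_of_pos (h.slope_pos n hn),
    ← abs_mul, abs_of_pos (h.slope_pos n hn)]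
  ring_nf

lemma fst_mem_Icc_of_mem (h : IsFractalInterpolationSystem N x y a b E c Φ) {k : ℕ} {p : ℝ × ℝ}
    (hp : p ∈ interpOrbit N x y Φ k) : p.1 ∈ Icc (x 0) (x N) := by
  induction k generalizing p with
  | zero =>
    obtain ⟨i, hi, rfl⟩ := hp
    exact h.node_mem_Icc hi
  | succ k ih =>
    obtain ⟨n, hn, q, hq, rfl⟩ := mem_interpOrbit_succ.1 hp
    have hnN := Finset.mem_Icc.1 hn
    exact Icc_subset_Icc (h.node_mem_Icc (by omega)).1 (h.node_mem_Icc hnN.2).2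
      (h.fst_apply_mem_Icc hn (ih hq))

lemma node_mem (h : IsFractalInterpolationSystem N x y a b E c Φ) (k : ℕ) {i : ℕ} (hi : i ≤ N) :
    (x i, y i) ∈ interpOrbit N x y Φ k := by
  induction k generalizing i with
  | zero => exact ⟨i, hi, rfl⟩
  | succ k ih =>
    refine mem_interpOrbit_succ.2 ?_
    rcases Nat.eq_zero_or_pos i with rfl | hi₀
    · exact ⟨1, Finset.mem_Icc.2 ⟨le_rfl, h.one_le⟩, _, ih (Nat.zero_le N),
        h.apply_left k 1 (Finset.mem_Icc.2 ⟨le_rfl, h.one_le⟩)⟩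
    · have hiN : i ∈ Finset.Icc 1 N := Finset.mem_Icc.2 ⟨hi₀, hi⟩
      exact ⟨i, hiN, _, ih le_rfl, h.apply_right k i hiN⟩

/-- The strip `I × [-B, B]` is invariant as soon as `(1 - c) B ≥ E |I| + 2 max |yᵢ|`. -/
lemma exists_abs_snd_le (h : IsFractalInterpolationSystem N x y a b E c Φ) :
    ∃ B, ∀ k, ∀ p ∈ interpOrbit N x y Φ k, |p.2| ≤ B := by
  obtain ⟨Y, hY⟩ : ∃ Y, ∀ i ≤ N, |y i| ≤ Y :=
    ⟨∑ i ∈ Finset.range (N + 1), |y i|, fun i hi => Finset.single_le_sum (f := fun i => |y i|)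
      (fun _ _ => abs_nonneg _) (Finset.mem_range.2 (Nat.lt_succ_of_le hi))⟩
  have hY₀ : 0 ≤ Y := (abs_nonneg _).trans (hY 0 (Nat.zero_le N))
  have hc₁ : 0 < 1 - c := sub_pos.2 h.contraction_lt_one
  refine ⟨(E * (x N - x 0) + 2 * Y) / (1 - c), fun k => ?_⟩
  set B := (E * (x N - x 0) + 2 * Y) / (1 - c)
  have hB : (1 - c) * B = E * (x N - x 0) + 2 * Y := mul_div_cancel₀ _ hc₁.ne'
  have hIc : 0 ≤ x N - x 0 := sub_nonneg.2 (h.node_mem_Icc le_rfl).1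
  induction k with
  | zero =>
    rintro _ ⟨i, hi, rfl⟩
    nlinarith [hY i hi, h.lipschitz_nonneg, h.contraction_nonneg]
  | succ k ih =>
    intro p hp
    obtain ⟨n, hn, q, hq, rfl⟩ := mem_interpOrbit_succ.1 hp
    have hn₀ : n - 1 ≤ N := by have := Finset.mem_Icc.1 hn; omega
    have hq₁ : dist q.1 (x 0) ≤ x N - x 0 := by
      have := h.fst_mem_Icc_of_mem hq
      rw [Real.dist_eq, abs_of_nonneg (by linarith [this.1])]
      linarith [this.2]
    have hq₂ : dist q.2 (y 0) ≤ B + Y := by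
      rw [Real.dist_eq]
      linarith [abs_sub (q.2) (y 0), ih q hq, hY 0 (Nat.zero_le N)]
    have hstep := h.dist_snd_le k n hn q (x 0, y 0)
    rw [h.apply_left k n hn, Real.dist_eq] at hstep
    calc |(Φ k n q).2| ≤ |(Φ k n q).2 - y (n - 1)| + |y (n - 1)| := by
          linarith [abs_sub_abs_le_abs_sub (Φ k n q).2 (y (n - 1))]
      _ ≤ E * (x N - x 0) + c * (B + Y) + Y := by
        gcongr
        · exact hstep.trans (by gcongr <;> [exact h.lipschitz_nonneg; exact h.contraction_nonneg])
        · exact hY _ hn₀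
      _ ≤ B := by nlinarith [h.contraction_nonneg, h.contraction_lt_one]

lemma vertDistLE_image (h : IsFractalInterpolationSystem N x y a b E c Φ) {r δ ε : ℝ}
    (hr : 0 < r) (hra : ∀ n ∈ Finset.Icc 1 N, r ≤ a n) {k n : ℕ} (hn : n ∈ Finset.Icc 1 N)
    {A : Set (ℝ × ℝ)} {z : ℝ × ℝ} (hA : VertDistLE A z δ ε) :
    VertDistLE (Φ k n '' A) (Φ k n z) (r * δ) (E * δ + c * ε) :=
  hA.image hr h.lipschitz_nonneg h.contraction_nonneg
    (fun p q => by
      rw [h.dist_fst_apply k hn]; exact mul_le_mul_of_nonneg_right (hra n hn) dist_nonneg)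
    (h.dist_snd_le k n hn)

/-- A point of the next orbit close to a node `xᵢ` is the image of a point close to `x_N`
under the `i`-th map or of a point close to `x₀` under the `(i+1)`-st one. -/
lemma vertDistLE_node_succ (h : IsFractalInterpolationSystem N x y a b E c Φ) {r δ V W : ℝ}
    (hr : 0 < r) (hra : ∀ n ∈ Finset.Icc 1 N, r ≤ a n)
    (hcell : ∀ n ∈ Finset.Icc 1 N, r * δ ≤ x n - x (n - 1)) {k : ℕ}
    (h₀ : VertDistLE (interpOrbit N x y Φ k) (x 0, y 0) δ V)
    (h₁ : VertDistLE (interpOrbit N x y Φ k) (x N, y N) δ V) (hW : E * δ + c * V ≤ W)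
    {i : ℕ} (hi : i ≤ N) : VertDistLE (interpOrbit N x y Φ (k + 1)) (x i, y i) (r * δ) W := by
  intro p hp hpi
  obtain ⟨n, hn, q, hq, rfl⟩ := mem_interpOrbit_succ.1 hp
  have hpn := h.fst_apply_mem_Icc (k := k) hn (h.fst_mem_Icc_of_mem hq)
  refine le_trans ?_ hW
  rcases eq_or_eq_succ_of_mem_Icc_of_abs_sub_lt h.monotoneOn hcell hn hi hpn
    (Real.dist_eq _ _ ▸ hpi) with rfl | rfl
  · have := h.vertDistLE_image hr hra (k := k) hn h₁
    rw [h.apply_right k n hn] at this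
    exact this _ ⟨q, hq, rfl⟩ hpi
  · have := h.vertDistLE_image hr hra (k := k) hn h₀
    rw [h.apply_left k _ hn] at this
    exact this _ ⟨q, hq, rfl⟩ (by simpa using hpi)

/-- Both points are close to the node `xₙ` separating their cells. -/
lemma dist_snd_le_of_lt (h : IsFractalInterpolationSystem N x y a b E c Φ) {δ W : ℝ} {k : ℕ}
    (hnode : ∀ i ≤ N, VertDistLE (interpOrbit N x y Φ (k + 1)) (x i, y i) δ W)
    {n m : ℕ} (hnm : n < m) (hm : m ≤ N) {p z : ℝ × ℝ} (hp : p ∈ interpOrbit N x y Φ (k + 1))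
    (hz : z ∈ interpOrbit N x y Φ (k + 1)) (hpn : p.1 ≤ x n) (hzm : x (m - 1) ≤ z.1)
    (hpz : dist p.1 z.1 < δ) : dist p.2 z.2 ≤ 2 * W := by
  have hxnm : x n ≤ x (m - 1) :=
    h.monotoneOn (mem_Iic.2 (by omega)) (mem_Iic.2 (by omega)) (by omega)
  rw [Real.dist_eq, abs_sub_comm, abs_of_nonneg (by linarith)] at hpz
  have hp' := hnode n (by omega) p hp
    (by rw [Real.dist_eq, abs_of_nonpos (by linarith)]; linarith)
  have hz' := hnode n (by omega) z hz
    (by rw [Real.dist_eq, abs_of_nonneg (by linarith)]; linarith)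
  linarith [dist_triangle_right p.2 z.2 (y n)]

lemma oscLE_succ (h : IsFractalInterpolationSystem N x y a b E c Φ) {r δ V W : ℝ}
    (hr : 0 < r) (hra : ∀ n ∈ Finset.Icc 1 N, r ≤ a n) (hδ : 0 ≤ δ) {k : ℕ}
    (hosc : OscLE (interpOrbit N x y Φ k) δ (2 * V))
    (hnode : ∀ i ≤ N, VertDistLE (interpOrbit N x y Φ (k + 1)) (x i, y i) (r * δ) W)
    (hW : E * δ + c * V ≤ W) : OscLE (interpOrbit N x y Φ (k + 1)) (r * δ) (2 * W) := by
  intro z hz p hp hpz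
  obtain ⟨m, hm, z', hz', rfl⟩ := mem_interpOrbit_succ.1 hz
  obtain ⟨n, hn, p', hp', rfl⟩ := mem_interpOrbit_succ.1 hp
  have hzm := h.fst_apply_mem_Icc (k := k) hm (h.fst_mem_Icc_of_mem hz')
  have hpn := h.fst_apply_mem_Icc (k := k) hn (h.fst_mem_Icc_of_mem hp')
  rcases lt_trichotomy n m with hnm | rfl | hmn
  · exact h.dist_snd_le_of_lt hnode hnm (Finset.mem_Icc.1 hm).2 hp hz hpn.2 hzm.1 hpz
  · have := h.vertDistLE_image hr hra hn (hosc z' hz') _ ⟨p', hp', rfl⟩ hpz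
    nlinarith [h.lipschitz_nonneg]
  · rw [dist_comm] at hpz ⊢
    exact h.dist_snd_le_of_lt hnode hmn (Finset.mem_Icc.1 hn).2 hz hp hzm.2 hpn.1 hpz

lemma vertDistLE_oscLE_orbit_add (h : IsFractalInterpolationSystem N x y a b E c Φ)
    {r δ B : ℝ} {V : ℕ → ℝ} (hr : 0 < r) (hr₁ : r ≤ 1) (hra : ∀ n ∈ Finset.Icc 1 N, r ≤ a n)
    (hδ : 0 ≤ δ) (hcell : ∀ n ∈ Finset.Icc 1 N, δ ≤ x n - x (n - 1))
    (hB : ∀ k, ∀ p ∈ interpOrbit N x y Φ k, |p.2| ≤ B) (hV₀ : 2 * B ≤ V 0)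
    (hV : ∀ j, E * (r ^ j * δ) + c * V j ≤ V (j + 1)) (j m : ℕ) :
    (∀ i ≤ N, VertDistLE (interpOrbit N x y Φ (m + j)) (x i, y i) (r ^ j * δ) (V j)) ∧
      OscLE (interpOrbit N x y Φ (m + j)) (r ^ j * δ) (2 * V j) := by
  induction j with
  | zero =>
    have hspread : ∀ p ∈ interpOrbit N x y Φ m, ∀ q ∈ interpOrbit N x y Φ m,
        dist p.2 q.2 ≤ V 0 := fun p hp q hq => by
      rw [Real.dist_eq]
      linarith [abs_sub p.2 q.2, hB m p hp, hB m q hq]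
    refine ⟨fun i hi p hp _ => hspread p hp _ (h.node_mem m hi), fun z hz p hp _ => ?_⟩
    linarith [hspread p hp z hz, dist_nonneg.trans (hspread p hp z hz)]
  | succ j ih =>
    obtain ⟨hnode, hosc⟩ := ih
    have hcell' : ∀ n ∈ Finset.Icc 1 N, r * (r ^ j * δ) ≤ x n - x (n - 1) := fun n hn =>
      le_trans (by
        rw [← mul_assoc, ← pow_succ']
        exact mul_le_of_le_one_left hδ (pow_le_one₀ hr.le hr₁)) (hcell n hn)
    have hnode' := fun i (hi : i ≤ N) => h.vertDistLE_node_succ hr hra hcell'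
      (hnode 0 (Nat.zero_le N)) (hnode N le_rfl) (hV j) hi
    rw [← add_assoc, pow_succ', mul_assoc]
    exact ⟨hnode', h.oscLE_succ hr hra (by positivity) hosc hnode' (hV j)⟩

lemma eventually_oscLE (h : IsFractalInterpolationSystem N x y a b E c Φ) :
    ∀ ε > 0, ∃ δ > 0, ∀ᶠ k in atTop, OscLE (interpOrbit N x y Φ k) δ ε := by
  intro ε hε
  have h1N : 1 ∈ Finset.Icc 1 N := Finset.mem_Icc.2 ⟨le_rfl, h.one_le⟩
  obtain ⟨r, hr, hra⟩ := Finset.exists_gt_forall_ge_of_forall_gt h.slope_pos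
  have hr₁ : r < 1 := (hra 1 h1N).trans_lt (h.slope_lt_one 1 h1N)
  obtain ⟨δ, hδ, hcell⟩ := Finset.exists_gt_forall_ge_of_forall_gt
    (s := Finset.Icc 1 N) (f := fun n => x n - x (n - 1)) (C := 0) fun n hn => by
      obtain ⟨hn₁, hnN⟩ := Finset.mem_Icc.1 hn
      have := h.node_lt (n - 1) (by omega)
      rw [Nat.sub_add_cancel hn₁] at this
      exact sub_pos.2 this
  obtain ⟨B, hB⟩ := h.exists_abs_snd_le
  set V := oscBound (2 * B) E c r δ
  have hsmall : ∀ᶠ j in atTop, V j < ε / 2 :=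
    eventually_lt_of_le_mul_add h.contraction_nonneg h.contraction_lt_one
      (fun j => (add_comm _ _).le)
      (by simpa using ((tendsto_pow_atTop_nhds_zero_of_lt_one hr.le hr₁).mul_const δ).const_mul E)
      (half_pos hε)
  obtain ⟨j, hj⟩ := hsmall.exists
  refine ⟨r ^ j * δ, by positivity, eventually_atTop.2 ⟨j, fun k hk => ?_⟩⟩
  obtain ⟨m, rfl⟩ := Nat.exists_eq_add_of_le' hk
  exact (h.vertDistLE_oscLE_orbit_add hr hr₁.le hra hδ.le hcell hB le_rfl (fun j => le_rfl)
    j m).2.mono le_rfl (by linarith)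

lemma exists_mem_dist_fst_le (h : IsFractalInterpolationSystem N x y a b E c Φ) {A : ℝ}
    (hA : ∀ n ∈ Finset.Icc 1 N, a n ≤ A) (k : ℕ) {t : ℝ} (ht : t ∈ Icc (x 0) (x N)) :
    ∃ p ∈ interpOrbit N x y Φ k, dist p.1 t ≤ A ^ k * (x N - x 0) := by
  induction k generalizing t with
  | zero =>
    refine ⟨(x 0, y 0), h.node_mem 0 (Nat.zero_le N), ?_⟩
    rw [Real.dist_eq, abs_sub_comm, abs_of_nonneg (by linarith [ht.1])]
    linarith [ht.2]
  | succ k ih =>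
    obtain ⟨n, hn, htn⟩ := exists_mem_Icc_pred_of_mem_Icc h.one_le ht
    have han := h.slope_pos n hn
    have h₀ := congrArg Prod.fst (h.apply_left k n hn)
    have h₁ := congrArg Prod.fst (h.apply_right k n hn)
    simp only [h.fst_apply] at h₀ h₁
    set s := (t - b n) / a n
    have hs : a n * s + b n = t := by simp only [s]; field_simp; ring
    have hsI : s ∈ Icc (x 0) (x N) := by
      constructor <;> nlinarith [htn.1, htn.2]
    obtain ⟨p, hp, hps⟩ := ih hsI
    refine ⟨Φ k n p, mem_interpOrbit_succ.2 ⟨n, hn, p, hp, rfl⟩, ?_⟩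
    have hdist : dist (Φ k n p).1 t = a n * dist p.1 s := by
      rw [h.fst_apply, ← hs, Real.dist_eq, Real.dist_eq, ← abs_of_pos han, ← abs_mul,
        abs_of_pos han]
      ring_nf
    rw [hdist, pow_succ', mul_assoc]
    exact mul_le_mul (hA n hn) hps dist_nonneg ((han.le).trans (hA n hn))

lemma eventually_exists_mem_dist_fst_lt (h : IsFractalInterpolationSystem N x y a b E c Φ)
    {t η : ℝ} (ht : t ∈ Icc (x 0) (x N)) (hη : 0 < η) :
    ∀ᶠ k in atTop, ∃ p ∈ interpOrbit N x y Φ k, dist p.1 t < η := by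
  obtain ⟨A, hA₁, hA⟩ := Finset.exists_lt_forall_le_of_forall_lt h.slope_lt_one
  have hA₀ : 0 ≤ A := (h.slope_pos 1 (Finset.mem_Icc.2 ⟨le_rfl, h.one_le⟩)).le.trans
    (hA 1 (Finset.mem_Icc.2 ⟨le_rfl, h.one_le⟩))
  filter_upwards [((tendsto_pow_atTop_nhds_zero_of_lt_one hA₀ hA₁).mul_const
    (x N - x 0)).eventually (gt_mem_nhds (by simpa using hη))] with k hk
  obtain ⟨p, hp, hpt⟩ := h.exists_mem_dist_fst_le hA k ht
  exact ⟨p, hp, hpt.trans_lt hk⟩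

lemma hausdorffEDist_ne_top (h : IsFractalInterpolationSystem N x y a b E c Φ)
    {G : Set (ℝ × ℝ)} (hGne : G.Nonempty) (hG : Bornology.IsBounded G) (k : ℕ) :
    hausdorffEDist (interpOrbit N x y Φ k) G ≠ ⊤ := by
  obtain ⟨B, hB⟩ := h.exists_abs_snd_le
  refine hausdorffEDist_ne_top_of_nonempty_of_bounded ⟨_, h.node_mem k (Nat.zero_le N)⟩ hGne
    (((isBounded_Icc (x 0) (x N)).prod (isBounded_Icc (-B) B)).subset fun p hp => ?_) hG
  exact ⟨h.fst_mem_Icc_of_mem hp, abs_le.1 (hB k p hp)⟩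

lemma exists_continuousOn_graph_eq_of_tendsto (h : IsFractalInterpolationSystem N x y a b E c Φ)
    {G : Set (ℝ × ℝ)} (hGne : G.Nonempty) (hG : IsCompact G)
    (hlim : Tendsto (fun k => hausdorffDist (interpOrbit N x y Φ k) G) atTop (𝓝 0)) :
    ∃ g : ℝ → ℝ, ContinuousOn g (Icc (x 0) (x N)) ∧
      G = {p : ℝ × ℝ | p.1 ∈ Icc (x 0) (x N) ∧ p.2 = g p.1} ∧ ∀ n ≤ N, g (x n) = y n := by
  have hfin := h.hausdorffEDist_ne_top hGne hG.isBounded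
  have hGI : ∀ p ∈ G, p.1 ∈ Icc (x 0) (x N) := subset_of_forall_subset_of_tendsto_hausdorffDist
    (isClosed_Icc.preimage continuous_fst) (fun k p hp => h.fst_mem_Icc_of_mem hp)
    (fun k => ⟨_, h.node_mem k (Nat.zero_le N)⟩) hfin hlim
  obtain ⟨g, hg, hGg⟩ := exists_continuousOn_graph_eq hGI
    (fun t ht => exists_mem_fst_eq_of_tendsto_hausdorffDist hG hfin hlim
      fun η hη => h.eventually_exists_mem_dist_fst_lt ht hη)
    (oscLE_of_tendsto_hausdorffDist hfin hlim h.eventually_oscLE)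
  refine ⟨g, hg, hGg, fun n hn => ?_⟩
  have hnode := mem_of_forall_mem_of_tendsto_hausdorffDist hG.isClosed hGne
    (fun k => h.node_mem k hn) hfin hlim
  rw [hGg] at hnode
  exact hnode.2.symm

end IsFractalInterpolationSystem

lemma dist_affine_le {e γ f E c u v u' v' : ℝ} (he : |e| ≤ E) (hγ : |γ| ≤ c) :
    dist (e * u + γ * v + f) (e * u' + γ * v' + f) ≤ E * dist u u' + c * dist v v' := by
  simp only [Real.dist_eq]
  calc |e * u + γ * v + f - (e * u' + γ * v' + f)| = |e * (u - u') + γ * (v - v')| := by ring_nf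
    _ ≤ |e| * |u - u'| + |γ| * |v - v'| := by
      rw [← abs_mul, ← abs_mul]; exact abs_add_le _ _
    _ ≤ E * |u - u'| + c * |v - v'| := by gcongr

lemma exists_isFractalInterpolationSystem {N M : ℕ} {x y a b : ℕ → ℝ} {L : ℕ → ℝ → ℝ}
    {e γ f : ℕ → ℕ → ℝ} {ω : ℕ → ℕ → ℝ × ℝ → ℝ × ℝ} {σ : ℕ → ℕ}
    (hN : 1 ≤ N) (hx : ∀ i, i < N → x i < x (i + 1))
    (ha : ∀ n ∈ Finset.Icc 1 N, 0 < a n ∧ a n < 1) (hL : ∀ n t, L n t = a n * t + b n)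
    (hL0 : ∀ n ∈ Finset.Icc 1 N, L n (x 0) = x (n - 1))
    (hLN : ∀ n ∈ Finset.Icc 1 N, L n (x N) = x n)
    (hγ : ∀ n ∈ Finset.Icc 1 N, ∀ k ∈ Finset.Icc 1 M, |γ n k| < 1)
    (hjoin0 : ∀ n ∈ Finset.Icc 1 N, ∀ k ∈ Finset.Icc 1 M,
      e n k * x 0 + γ n k * y 0 + f n k = y (n - 1))
    (hjoinN : ∀ n ∈ Finset.Icc 1 N, ∀ k ∈ Finset.Icc 1 M,
      e n k * x N + γ n k * y N + f n k = y n)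
    (hω : ∀ n k p, ω n k p = (L n p.1, e n k * p.1 + γ n k * p.2 + f n k))
    (hσ : ∀ j, σ j ∈ Finset.Icc 1 M) :
    ∃ E c, IsFractalInterpolationSystem N x y a b E c (fun k n => ω n (σ (k + 1))) := by
  set P := Finset.Icc 1 N ×ˢ Finset.Icc 1 M
  have hP : ∀ {n k}, n ∈ Finset.Icc 1 N → k ∈ Finset.Icc 1 M → (n, k) ∈ P :=
    fun hn hk => Finset.mem_product.2 ⟨hn, hk⟩
  obtain ⟨c, hc₁, hc⟩ := Finset.exists_lt_forall_le_of_forall_lt (s := P)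
    (f := fun q => |γ q.1 q.2|) fun q hq =>
      hγ _ (Finset.mem_product.1 hq).1 _ (Finset.mem_product.1 hq).2
  have hE : ∀ {n k}, n ∈ Finset.Icc 1 N → k ∈ Finset.Icc 1 M → |e n k| ≤ ∑ q ∈ P, |e q.1 q.2| :=
    fun hn hk => Finset.single_le_sum (f := fun q => |e q.1 q.2|) (fun _ _ => abs_nonneg _)
      (hP hn hk)
  exact ⟨_, max c 0,
    { one_le := hN
      node_lt := hx
      slope_pos := fun n hn => (ha n hn).1
      slope_lt_one := fun n hn => (ha n hn).2
      fst_apply := fun k n p => by rw [hω, hL]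
      dist_snd_le := fun k n hn p q => by
        rw [hω, hω]
        exact dist_affine_le (hE hn (hσ _)) ((hc _ (hP hn (hσ _))).trans (le_max_left _ _))
      apply_left := fun k n hn => by rw [hω, hL0 n hn, hjoin0 n hn _ (hσ _)]
      apply_right := fun k n hn => by rw [hω, hLN n hn, hjoinN n hn _ (hσ _)]
      lipschitz_nonneg := Finset.sum_nonneg fun _ _ => abs_nonneg _
      contraction_nonneg := le_max_right _ _
      contraction_lt_one := max_lt hc₁ one_pos }⟩

theorem stmt_9_general (N M : ℕ) (hN : 1 ≤ N)
    (x y : ℕ → ℝ) (hx : ∀ i, i < N → x i < x (i + 1))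
    (a bcoef : ℕ → ℝ) (ha : ∀ n ∈ Finset.Icc 1 N, 0 < a n ∧ a n < 1)
    (L : ℕ → ℝ → ℝ) (hL : ∀ n t, L n t = a n * t + bcoef n)
    (hL0 : ∀ n ∈ Finset.Icc 1 N, L n (x 0) = x (n - 1))
    (hLN : ∀ n ∈ Finset.Icc 1 N, L n (x N) = x n)
    (e γ f : ℕ → ℕ → ℝ)
    (hγ : ∀ n ∈ Finset.Icc 1 N, ∀ k ∈ Finset.Icc 1 M, |γ n k| < 1)
    (hjoin0 : ∀ n ∈ Finset.Icc 1 N, ∀ k ∈ Finset.Icc 1 M,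
      e n k * x 0 + γ n k * y 0 + f n k = y (n - 1))
    (hjoinN : ∀ n ∈ Finset.Icc 1 N, ∀ k ∈ Finset.Icc 1 M,
      e n k * x N + γ n k * y N + f n k = y n)
    (ω : ℕ → ℕ → ℝ × ℝ → ℝ × ℝ)
    (hω : ∀ n k p, ω n k p = (L n p.1, e n k * p.1 + γ n k * p.2 + f n k))
    (W : ℕ → Set (ℝ × ℝ) → Set (ℝ × ℝ))
    (hW : ∀ k A, W k A = ⋃ n ∈ Finset.Icc 1 N, ω n k '' A)
    (σ : ℕ → ℕ) (hσ : ∀ j, σ j ∈ Finset.Icc 1 M)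
    (S : ℕ → Set (ℝ × ℝ))
    (hS0 : S 0 = {p | ∃ i ≤ N, p = (x i, y i)})
    (hSS : ∀ j, S (j + 1) = W (σ (j + 1)) (S j))
    (Gσ : Set (ℝ × ℝ)) (hGne : Gσ.Nonempty) (hGc : IsCompact Gσ)
    (hlim : Filter.Tendsto (fun k => hausdorffDist (S k) Gσ)
      Filter.atTop (nhds 0)) :
    ∃ g : ℝ → ℝ, ContinuousOn g (Icc (x 0) (x N)) ∧
      Gσ = {p : ℝ × ℝ | p.1 ∈ Icc (x 0) (x N) ∧ p.2 = g p.1} ∧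
      ∀ n ≤ N, g (x n) = y n := by
  obtain ⟨E, c, hsys⟩ :=
    exists_isFractalInterpolationSystem hN hx ha hL hL0 hLN hγ hjoin0 hjoinN hω hσ
  obtain rfl : S = interpOrbit N x y (fun k n => ω n (σ (k + 1))) := by
    funext k
    induction k with
    | zero => exact hS0
    | succ k ih => rw [hSS, hW, ih]; rfl
  exact hsys.exists_continuousOn_graph_eq_of_tendsto hGne hGc hlim

/-- Theorem 2.1: For the SIFS `ω n k (x,y) = (L n x, G n k (x,y))`
with `|γ n k| < 1` and join-up conditions, and a code `σ`, the attractor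
`G_σ = lim_k W_{σ k} ∘ ⋯ ∘ W_{σ 1}(S₀)` is the graph of a continuous function
`g_σ : I → ℝ` with `g_σ (x n) = y n` for all `n`. -/
theorem stmt_9 (N M : ℕ) (hN : 1 ≤ N) (hM : 1 ≤ M)
    (x y : ℕ → ℝ) (hx : ∀ i, i < N → x i < x (i + 1))
    (a bcoef : ℕ → ℝ) (ha : ∀ n ∈ Finset.Icc 1 N, 0 < a n ∧ a n < 1)
    (L : ℕ → ℝ → ℝ) (hL : ∀ n t, L n t = a n * t + bcoef n)
    (hL0 : ∀ n ∈ Finset.Icc 1 N, L n (x 0) = x (n - 1))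
    (hLN : ∀ n ∈ Finset.Icc 1 N, L n (x N) = x n)
    (e γ f : ℕ → ℕ → ℝ)
    (hγ : ∀ n ∈ Finset.Icc 1 N, ∀ k ∈ Finset.Icc 1 M, |γ n k| < 1)
    (hjoin0 : ∀ n ∈ Finset.Icc 1 N, ∀ k ∈ Finset.Icc 1 M,
      e n k * x 0 + γ n k * y 0 + f n k = y (n - 1))
    (hjoinN : ∀ n ∈ Finset.Icc 1 N, ∀ k ∈ Finset.Icc 1 M,
      e n k * x N + γ n k * y N + f n k = y n)
    (ω : ℕ → ℕ → ℝ × ℝ → ℝ × ℝ)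
    (hω : ∀ n k p, ω n k p = (L n p.1, e n k * p.1 + γ n k * p.2 + f n k))
    (W : ℕ → Set (ℝ × ℝ) → Set (ℝ × ℝ))
    (hW : ∀ k A, W k A = ⋃ n ∈ Finset.Icc 1 N, ω n k '' A)
    (σ : ℕ → ℕ) (hσ : ∀ j, σ j ∈ Finset.Icc 1 M)
    (S : ℕ → Set (ℝ × ℝ))
    (hS0 : S 0 = {p | ∃ i ≤ N, p = (x i, y i)})
    (hSS : ∀ j, S (j + 1) = W (σ (j + 1)) (S j))
    (Gσ : Set (ℝ × ℝ)) (hGne : Gσ.Nonempty) (hGc : IsCompact Gσ)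
    (hlim : Filter.Tendsto (fun k => hausdorffDist (S k) Gσ)
      Filter.atTop (nhds 0)) :
    ∃ g : ℝ → ℝ, ContinuousOn g (Icc (x 0) (x N)) ∧
      Gσ = {p : ℝ × ℝ | p.1 ∈ Icc (x 0) (x N) ∧ p.2 = g p.1} ∧
      ∀ n ≤ N, g (x n) = y n :=
  stmt_9_general N M hN x y hx a bcoef ha L hL hL0 hLN e γ f hγ hjoin0 hjoinN ω hω W hW σ hσ S hS0
    hSS Gσ hGne hGc hlim
end

section
/- (Theorem 4.1, single-IFS case) Let $g : I \to \mathbb{R}$ be the fractal interpolation function satisfying $g(L_n(x)) = \gamma_n g(x) + q_n(x)$ for all $x \in I$, $n = 1, \ldots, N$, where $L_n(x) = a_n x + b_n$ with $a_n \in (0,1)$, $|\gamma_n| < 1$, and $q_n$ continuous. Define $\hat{g}(x) = \hat{y}_0 + \int_{x_0}^x g(t)\, dt$. Then $\hat{g}$ satisfies the self-referential equation $\hat{g}(L_n(x)) = \hat{\gamma}_n \hat{g}(x) + \hat{q}_n(x)$ for all $x \in I$, where $\hat{\gamma}_n = a_n \gamma_n$ and $\hat{q}_n(x) = \hat{y}_{n-1}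 - a_n \gamma_n \hat{y}_0 + a_n \int_{x_0}^x q_n(t)\, dt$, with $\hat{y}_{n-1} = \hat{g}(x_{n-1}) = \hat{g}(L_n(x_0))$. -/
open Set intervalIntegral

/-- Theorem 4.1, single-IFS case: the integral
`ĝ(x) = ŷ₀ + ∫_{x₀}^x g` of a FIF `g` with `g(L n x) = γ n g x + q n x`
satisfies the self-referential equation with parameters
`γ̂ n = a n γ n`, `q̂ n (x) = ŷ_{n-1} - a n γ n ŷ₀ + a n ∫_{x₀}^x q n`. -/
theorem stmt_11 (N : ℕ) (hN : 1 ≤ N) (x : ℕ → ℝ)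
    (hx : ∀ i, i < N → x i < x (i + 1))
    (a b γ : ℕ → ℝ)
    (ha : ∀ n ∈ Finset.Icc 1 N, 0 < a n ∧ a n < 1)
    (hγ : ∀ n ∈ Finset.Icc 1 N, |γ n| < 1)
    (L : ℕ → ℝ → ℝ) (hL : ∀ n t, L n t = a n * t + b n)
    (hL0 : ∀ n ∈ Finset.Icc 1 N, L n (x 0) = x (n - 1))
    (hLN : ∀ n ∈ Finset.Icc 1 N, L n (x N) = x n)
    (q : ℕ → ℝ → ℝ) (hq : ∀ n ∈ Finset.Icc 1 N, ContinuousOn (q n) (Icc (x 0) (x N)))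
    (g : ℝ → ℝ) (hg : ContinuousOn g (Icc (x 0) (x N)))
    (hfe : ∀ n ∈ Finset.Icc 1 N, ∀ t ∈ Icc (x 0) (x N),
      g (L n t) = γ n * g t + q n t)
    (yhat0 : ℝ) (ghat : ℝ → ℝ)
    (hghat : ∀ t, ghat t = yhat0 + ∫ s in (x 0)..t, g s) :
    ∀ n ∈ Finset.Icc 1 N, ∀ t ∈ Icc (x 0) (x N),
      ghat (L n t) = (a n * γ n) * ghat t +
        (ghat (L n (x 0)) - a n * γ n * yhat0 + a n * ∫ s in (x 0)..t, q n s) := by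

  intro n hn t ht
  have hn' := Finset.mem_Icc.mp hn
  obtain ⟨han0, han1⟩ := ha n hn
  have hmono : ∀ i j : ℕ, i ≤ j → j ≤ N → x i ≤ x j := by
    intro i j hij hjN
    induction j, hij using Nat.le_induction with
    | base => exact le_refl _
    | succ j hij ih => exact le_trans (ih (by omega)) (le_of_lt (hx j (by omega)))
  have hx0t := ht.1
  have htN := ht.2
  have hLx0 : L n (x 0) = a n * x 0 + b n := hL n (x 0)
  have hLt : L n t = a n * t + b n := hL n t
  have hn1 : x 0 ≤ x (n - 1) := hmono 0 (n - 1) (Nat.zero_le _) (by omega)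
  have hnN : x n ≤ x N := hmono n N hn'.2 le_rfl
  have hLn0 := hL0 n hn
  have hLnN := hLN n hn
  have hx0L0 : x 0 ≤ L n (x 0) := by rw [hLn0]; exact hn1
  have hL0Lt : L n (x 0) ≤ L n t := by rw [hLx0, hLt]; nlinarith
  have hLtLN : L n t ≤ L n (x N) := by rw [hLt, hL n (x N)]; nlinarith
  have hLtN : L n t ≤ x N := le_trans hLtLN (by rw [hLnN]; exact hnN)
  have hL0N : L n (x 0) ≤ x N := le_trans hL0Lt hLtN
  have hsub1 : uIcc (x 0) (L n (x 0)) ⊆ Icc (x 0) (x N) := by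
    rw [uIcc_of_le hx0L0]; exact Icc_subset_Icc le_rfl hL0N
  have hsub2 : uIcc (L n (x 0)) (L n t) ⊆ Icc (x 0) (x N) := by
    rw [uIcc_of_le hL0Lt]; exact Icc_subset_Icc hx0L0 hLtN
  have hsub3 : uIcc (x 0) t ⊆ Icc (x 0) (x N) := by
    rw [uIcc_of_le hx0t]; exact Icc_subset_Icc le_rfl htN
  have hI1 : IntervalIntegrable g MeasureTheory.volume (x 0) (L n (x 0)) :=
    (hg.mono hsub1).intervalIntegrable
  have hI2 : IntervalIntegrable g MeasureTheory.volume (L n (x 0)) (L n t) :=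
    (hg.mono hsub2).intervalIntegrable
  have hIg : IntervalIntegrable g MeasureTheory.volume (x 0) t :=
    (hg.mono hsub3).intervalIntegrable
  have hIq : IntervalIntegrable (q n) MeasureTheory.volume (x 0) t :=
    ((hq n hn).mono hsub3).intervalIntegrable
  have hadd : ∫ s in (x 0)..(L n t), g s =
      (∫ s in (x 0)..(L n (x 0)), g s) + ∫ s in (L n (x 0))..(L n t), g s :=
    (integral_add_adjacent_intervals hI1 hI2).symm
  have hsubst : ∫ s in (L n (x 0))..(L n t), g s =
      a n * ∫ s in (x 0)..t, g (a n * s + b n) := by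
    rw [integral_comp_mul_add g (ne_of_gt han0) (b n), hLx0, hLt, smul_eq_mul]
    field_simp
  have hcongr : ∫ s in (x 0)..t, g (a n * s + b n) =
      ∫ s in (x 0)..t, (γ n * g s + q n s) := by
    apply integral_congr
    intro s hs
    show g (a n * s + b n) = γ n * g s + q n s
    rw [← hL n s]
    exact hfe n hn s (hsub3 hs)
  have hsplit : ∫ s in (x 0)..t, (γ n * g s + q n s) =
      γ n * (∫ s in (x 0)..t, g s) + ∫ s in (x 0)..t, q n s := by
    rw [integral_add (hIg.const_mul _) hIq, integral_const_mul]
  rw [hghat (L n t), hghat t, hghat (L n (x 0)), hadd, hsubst, hcongr, hsplit]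
  ring
end

section
/- With the setup of the previous statement, the value $\hat{y}_N = \hat{g}(x_N)$ satisfies the closed-form identity $\hat{y}_N = \hat{y}_0 + \frac{\sum_{j=1}^N a_j \int_{x_0}^{x_N} q_j(t)\, dt}{1 - \sum_{j=1}^N a_j \gamma_j}$, and more generally $\hat{y}_n = \hat{g}(x_n) = \hat{y}_0 + \sum_{j=1}^n a_j\big[\gamma_j(\hat{y}_N - \hat{y}_0) + \int_{x_0}^{x_N} q_j(t)\, dt\big]$ for $n = 1, \ldots, N$ (here $\sum_{j=1}^N a_j \gamma_j \neq 1$ since $\sum a_j = 1$ and $|\gamma_j| < 1$). -/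
/-!
Splitting `∫_{x₀}^{x_n} g` at the nodes and pulling each piece back to `[x₀, x_N]` by the affine
map `L_j` turns the functional equation into `∫_{x_{j-1}}^{x_j} g = a_j (γ_j G + Q_j)`, where
`G = ∫_{x₀}^{x_N} g` and `Q_j = ∫_{x₀}^{x_N} q_j`. For `n = N` this is the linear equation
`G = (∑ a_j γ_j) G + ∑ a_j Q_j`, which is uniquely solvable because `∑ a_j γ_j` is a weighted
average, with weights summing to `1`, of numbers in `(-1, 1)`.
-/

open Set intervalIntegral MeasureTheory

lemma Finset.sum_Icc_one_eq_sum_range {M : Type*} [AddCommMonoid M] (n : ℕ) (f : ℕ → M) :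
    ∑ j ∈ Finset.Icc 1 n, f j = ∑ i ∈ Finset.range n, f (i + 1) := by
  rw [← Finset.Ico_add_one_right_eq_Icc, Finset.sum_Ico_eq_sum_range]
  simp [add_comm]

lemma Finset.sum_Icc_one_sub_pred {M : Type*} [AddCommGroup M] (n : ℕ) (f : ℕ → M) :
    ∑ j ∈ Finset.Icc 1 n, (f j - f (j - 1)) = f n - f 0 := by
  rw [Finset.sum_Icc_one_eq_sum_range]
  simpa using Finset.sum_range_sub f n

lemma Finset.sum_mul_lt_one_of_abs_lt_one {ι : Type*} {s : Finset ι} {a γ : ι → ℝ}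
    (hs : s.Nonempty) (ha : ∀ j ∈ s, 0 < a j) (hγ : ∀ j ∈ s, |γ j| < 1)
    (hsum : ∑ j ∈ s, a j = 1) : ∑ j ∈ s, a j * γ j < 1 :=
  calc ∑ j ∈ s, a j * γ j < ∑ j ∈ s, a j * 1 :=
        Finset.sum_lt_sum_of_nonempty hs fun j hj =>
          mul_lt_mul_of_pos_left ((le_abs_self _).trans_lt (hγ j hj)) (ha j hj)
    _ = 1 := by simpa using hsum

lemma Finset.sum_eq_one_of_mul_eq_sub_pred {a x : ℕ → ℝ} {N : ℕ} (hx : x 0 ≠ x N)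
    (h : ∀ j ∈ Finset.Icc 1 N, a j * (x N - x 0) = x j - x (j - 1)) :
    ∑ j ∈ Finset.Icc 1 N, a j = 1 := by
  have hx' : x N - x 0 ≠ 0 := sub_ne_zero.2 hx.symm
  rw [← mul_div_cancel_right₀ (∑ j ∈ Finset.Icc 1 N, a j) hx', Finset.sum_mul,
    Finset.sum_congr rfl h, Finset.sum_Icc_one_sub_pred, div_self hx']

lemma mem_Icc_of_forall_lt_succ {α : Type*} [PartialOrder α] {x : ℕ → α} {N k : ℕ}
    (hx : ∀ i < N, x i < x (i + 1)) (hk : k ≤ N) : x k ∈ Icc (x 0) (x N) :=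
  have hmono := (strictMonoOn_Iic_of_lt_succ hx).monotoneOn
  ⟨hmono (by simp) hk (Nat.zero_le k), hmono hk (by simp) hk⟩

lemma integral_eq_sum_Icc_one_integral {f : ℝ → ℝ} {x : ℕ → ℝ} {n : ℕ}
    (hint : ∀ k < n, IntervalIntegrable f volume (x k) (x (k + 1))) :
    ∫ s in (x 0)..(x n), f s = ∑ j ∈ Finset.Icc 1 n, ∫ s in (x (j - 1))..(x j), f s := by
  rw [Finset.sum_Icc_one_eq_sum_range, ← sum_integral_adjacent_intervals hint]
  simp

lemma integral_affine_image_of_functional_eq {g q : ℝ → ℝ} {a b γ c d : ℝ}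
    (hg : IntervalIntegrable g volume c d) (hq : IntervalIntegrable q volume c d)
    (hfe : ∀ t ∈ uIcc c d, g (a * t + b) = γ * g t + q t) :
    ∫ s in (a * c + b)..(a * d + b), g s =
      a * (γ * (∫ s in c..d, g s) + ∫ s in c..d, q s) := by
  rw [← smul_integral_comp_mul_add, integral_congr hfe,
    integral_add (hg.const_mul γ) hq, intervalIntegral.integral_const_mul, smul_eq_mul]

theorem stmt_12_general (N : ℕ) (hN : 1 ≤ N) (x : ℕ → ℝ)
    (hx : ∀ i, i < N → x i < x (i + 1))
    (a b γ : ℕ → ℝ)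
    (ha : ∀ n ∈ Finset.Icc 1 N, 0 < a n ∧ a n < 1)
    (hγ : ∀ n ∈ Finset.Icc 1 N, |γ n| < 1)
    (L : ℕ → ℝ → ℝ) (hL : ∀ n t, L n t = a n * t + b n)
    (hL0 : ∀ n ∈ Finset.Icc 1 N, L n (x 0) = x (n - 1))
    (hLN : ∀ n ∈ Finset.Icc 1 N, L n (x N) = x n)
    (q : ℕ → ℝ → ℝ) (hq : ∀ n ∈ Finset.Icc 1 N, ContinuousOn (q n) (Icc (x 0) (x N)))
    (g : ℝ → ℝ) (hg : ContinuousOn g (Icc (x 0) (x N)))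
    (hfe : ∀ n ∈ Finset.Icc 1 N, ∀ t ∈ Icc (x 0) (x N),
      g (L n t) = γ n * g t + q n t)
    (yhat0 : ℝ) (ghat : ℝ → ℝ)
    (hghat : ∀ t, ghat t = yhat0 + ∫ s in (x 0)..t, g s) :
    (∑ j ∈ Finset.Icc 1 N, a j * γ j) ≠ 1 ∧
    ghat (x N) = yhat0 +
      (∑ j ∈ Finset.Icc 1 N, a j * ∫ s in (x 0)..(x N), q j s) /
        (1 - ∑ j ∈ Finset.Icc 1 N, a j * γ j) ∧
    ∀ n ∈ Finset.Icc 1 N, ghat (x n) = yhat0 +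
      ∑ j ∈ Finset.Icc 1 n, a j *
        (γ j * (ghat (x N) - yhat0) + ∫ s in (x 0)..(x N), q j s) := by
  have hx0N : x 0 < x N := strictMonoOn_Iic_of_lt_succ hx (by simp) (by simp) (by omega)
  have hgint : ∀ j ≤ N, ∀ k ≤ N, IntervalIntegrable g volume (x j) (x k) := fun j hj k hk =>
    (hg.mono (uIcc_subset_Icc (mem_Icc_of_forall_lt_succ hx hj)
      (mem_Icc_of_forall_lt_succ hx hk))).intervalIntegrable
  set G := ∫ s in (x 0)..(x N), g s
  set S := ∑ j ∈ Finset.Icc 1 N, a j * γ j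
  have hpiece : ∀ n ∈ Finset.Icc 1 N,
      ∫ s in (x (n - 1))..(x n), g s = a n * (γ n * G + ∫ s in (x 0)..(x N), q n s) := by
    intro n hn
    rw [← hL0 n hn, ← hLN n hn, hL, hL]
    refine integral_affine_image_of_functional_eq (hgint 0 (by omega) N le_rfl)
      ((hq n hn).intervalIntegrable_of_Icc hx0N.le) fun t ht => ?_
    rw [uIcc_of_le hx0N.le] at ht
    simpa only [hL] using hfe n hn t ht
  have hval : ∀ n ≤ N, ghat (x n) =
      yhat0 + ∑ j ∈ Finset.Icc 1 n, a j * (γ j * G + ∫ s in (x 0)..(x N), q j s) := by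
    intro n hn
    rw [hghat, integral_eq_sum_Icc_one_integral fun k hk => hgint k (by omega) (k + 1) (by omega)]
    exact congrArg _ (Finset.sum_congr rfl fun j hj => hpiece j (Finset.Icc_subset_Icc_right hn hj))
  have hsuma : ∑ j ∈ Finset.Icc 1 N, a j = 1 :=
    Finset.sum_eq_one_of_mul_eq_sub_pred hx0N.ne fun j hj => by
      rw [← hLN j hj, ← hL0 j hj, hL, hL]; ring
  have hS : S < 1 := Finset.sum_mul_lt_one_of_abs_lt_one (Finset.nonempty_Icc.2 hN)
    (fun j hj => (ha j hj).1) hγ hsuma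
  have hGN : ghat (x N) - yhat0 = G := by rw [hghat]; ring
  have hG : G = S * G + ∑ j ∈ Finset.Icc 1 N, a j * ∫ s in (x 0)..(x N), q j s :=
    calc G = ∑ j ∈ Finset.Icc 1 N, a j * (γ j * G + ∫ s in (x 0)..(x N), q j s) := by
          simpa [hghat] using hval N le_rfl
      _ = _ := by
          rw [Finset.sum_mul, ← Finset.sum_add_distrib]
          exact Finset.sum_congr rfl fun j _ => by ring
  refine ⟨hS.ne, ?_, fun n hn => by rw [hGN]; exact hval n (Finset.mem_Icc.1 hn).2⟩
  rw [hghat, add_right_inj, eq_div_iff (sub_ne_zero.2 hS.ne')]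
  linarith

/-- closed-form identities for the values `ŷ n = ĝ (x n)` of the
integral `ĝ(x) = ŷ₀ + ∫_{x₀}^x g` of the FIF `g`, and `∑ a_j γ_j ≠ 1`. -/
theorem stmt_12 (N : ℕ) (hN : 1 ≤ N) (x : ℕ → ℝ)
    (hx : ∀ i, i < N → x i < x (i + 1))
    (a b γ : ℕ → ℝ)
    (ha : ∀ n ∈ Finset.Icc 1 N, 0 < a n ∧ a n < 1)
    (hadef : ∀ n ∈ Finset.Icc 1 N, a n = (x n - x (n - 1)) / (x N - x 0))
    (hγ : ∀ n ∈ Finset.Icc 1 N, |γ n| < 1)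
    (L : ℕ → ℝ → ℝ) (hL : ∀ n t, L n t = a n * t + b n)
    (hL0 : ∀ n ∈ Finset.Icc 1 N, L n (x 0) = x (n - 1))
    (hLN : ∀ n ∈ Finset.Icc 1 N, L n (x N) = x n)
    (q : ℕ → ℝ → ℝ) (hq : ∀ n ∈ Finset.Icc 1 N, ContinuousOn (q n) (Icc (x 0) (x N)))
    (g : ℝ → ℝ) (hg : ContinuousOn g (Icc (x 0) (x N)))
    (hfe : ∀ n ∈ Finset.Icc 1 N, ∀ t ∈ Icc (x 0) (x N),
      g (L n t) = γ n * g t + q n t)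
    (yhat0 : ℝ) (ghat : ℝ → ℝ)
    (hghat : ∀ t, ghat t = yhat0 + ∫ s in (x 0)..t, g s) :
    (∑ j ∈ Finset.Icc 1 N, a j * γ j) ≠ 1 ∧
    ghat (x N) = yhat0 +
      (∑ j ∈ Finset.Icc 1 N, a j * ∫ s in (x 0)..(x N), q j s) /
        (1 - ∑ j ∈ Finset.Icc 1 N, a j * γ j) ∧
    ∀ n ∈ Finset.Icc 1 N, ghat (x n) = yhat0 +
      ∑ j ∈ Finset.Icc 1 n, a j *
        (γ j * (ghat (x N) - yhat0) + ∫ s in (x 0)..(x N), q j s) :=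
  stmt_12_general N hN x hx a b γ ha hγ L hL hL0 hLN q hq g hg hfe yhat0 ghat hghat
end
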